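/- Let (𝒫, 𝓡) be a control problem satisfying CNMS with 𝓡 = {R1,...,Rn}. Then the modular supervisors Sj = P || Rj (with P = ||𝒫) are nonconflicting: S1 || ... || Sn = P || R1 || ... || Rn is nonblocking. -/

import Mathlib

open scoped Classical

/-- A finite-automaton-style structure: alphabet, partial transition
function, initial state, and marked states. -/
structure Aut (Q E : Type) where
  alph : Set E
  δ : Q → E → Option Q
  q0 : Q
  Qm : Set Q

namespace Aut

variable {Q Q1 Q2 E : Type}

/-- Extension of the partial transition function to strings. -/
def run (A : Aut Q E) : Q → List E → Option Q
  | q, [] => some q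
  | q, e :: s => (A.δ q e).bind fun q' => A.run q' s

/-- Generated language. -/
def Lang (A : Aut Q E) : Set (List E) := {s | (A.run A.q0 s).isSome}

/-- Marked language. -/
def LangM (A : Aut Q E) : Set (List E) := {s | ∃ q ∈ A.Qm, A.run A.q0 s = some q}

def Reachable (A : Aut Q E) (q : Q) : Prop := ∃ s, A.run A.q0 s = some q

def Coreachable (A : Aut Q E) (q : Q) : Prop :=
  ∃ s q', A.run q s = some q' ∧ q' ∈ A.Qm

def Trim (A : Aut Q E) : Prop := ∀ q, A.Reachable q ∧ A.Coreachable q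

def Nonblocking (A : Aut Q E) : Prop := ∀ q, A.Reachable q → A.Coreachable q

def StronglyConnected (A : Aut Q E) : Prop := ∀ q1 q2 : Q, ∃ s, A.run q1 s = some q2

/-- Synchronous composition of two automata. -/
noncomputable def sync (A : Aut Q1 E) (B : Aut Q2 E) : Aut (Q1 × Q2) E where
  alph := A.alph ∪ B.alph
  δ := fun p e =>
    if e ∈ A.alph ∧ e ∈ B.alph then
      match A.δ p.1 e, B.δ p.2 e with
      | some a, some b => some (a, b)
      | _, _ => none
    else if e ∈ A.alph then (A.δ p.1 e).map (fun a => (a, p.2))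
    else if e ∈ B.alph then (B.δ p.2 e).map (fun b => (p.1, b))
    else none
  q0 := (A.q0, B.q0)
  Qm := {p | p.1 ∈ A.Qm ∧ p.2 ∈ B.Qm}

end Aut

namespace Aut

/-- Synchronous composition of a product system (pairwise disjoint alphabets):
the shuffle automaton on the product state space. -/
noncomputable def shuffle {m : ℕ} {Q : Fin m → Type} {E : Type}
    (A : ∀ i, Aut (Q i) E) : Aut (∀ i, Q i) E where
  alph := ⋃ i, (A i).alph
  δ := fun q e =>
    if h : ∃ i, e ∈ (A i).alph then
      ((A h.choose).δ (q h.choose) e).map fun q' => Function.update q h.choose q'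
    else none
  q0 := fun i => (A i).q0
  Qm := {q | ∀ i, q i ∈ (A i).Qm}

end Aut

namespace Aut

/-- Synchronous composition of an automaton with a state-event invariant
expression `μ needs C`: transitions labeled `μ` are removed from states
where the condition `C` is false. -/
noncomputable def restrict {Q E : Type} (A : Aut Q E) (μ : E) (C : Q → Prop) :
    Aut Q E where
  alph := A.alph
  δ := fun q e => if e = μ ∧ ¬ C q then none else A.δ q e
  q0 := A.q0
  Qm := A.Qm

end Aut

/-- A literal: a (possibly negated) state reference `P_i.q`. -/
structure Lit (m : ℕ) (Q : Fin m → Type) where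
  i : Fin m
  q : Q i
  pos : Bool

/-- Evaluation of a literal at a global state. -/
def Lit.eval {m : ℕ} {Q : Fin m → Type} (l : Lit m Q) (r : ∀ i, Q i) : Prop :=
  if l.pos then r l.i = l.q else r l.i ≠ l.q

/-- A predicate in disjunctive normal form over state references. -/
abbrev DNF (m : ℕ) (Q : Fin m → Type) := List (List (Lit m Q))

/-- Evaluation of a DNF predicate at a global state. -/
def DNF.eval {m : ℕ} {Q : Fin m → Type} (C : DNF m Q) (r : ∀ i, Q i) : Prop :=
  ∃ conj ∈ C, ∀ l ∈ conj, l.eval r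

/-- `K` is controllable with respect to `G` (given uncontrollable events `Su`). -/
def Controllable {QK QG E : Type} (Su : Set E) (K : Aut QK E) (G : Aut QG E) : Prop :=
  ∀ (s : List E) (u : E), u ∈ Su → (K.run K.q0 s).isSome →
    (G.run G.q0 (s ++ [u])).isSome → (K.run K.q0 (s ++ [u])).isSome

/-- A control problem satisfying the CNMS properties. -/
structure CNMS (m : ℕ) (Q : Fin m → Type) (E : Type) where
  plant : ∀ i, Aut (Q i) E
  /-- controllable events -/
  Sc : Set E
  /-- uncontrollable events -/
  Su : Set E
  /-- the requirements: state-event invariant expressions `μ needs C` -/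
  reqs : List (E × DNF m Q)
  /-- controllable and uncontrollable events are disjoint -/
  part : ∀ e : E, ¬(e ∈ Sc ∧ e ∈ Su)
  /-- each alphabet consists of controllable and uncontrollable events -/
  events : ∀ i, (plant i).alph ⊆ Sc ∪ Su
  /-- Property 1: the plant is a product system (pairwise disjoint alphabets) -/
  disj : ∀ i j, i ≠ j → ∀ e, ¬(e ∈ (plant i).alph ∧ e ∈ (plant j).alph)
  /-- transitions are labeled only by events of the owning plant's alphabet -/
  dom : ∀ i q e, (plant i).δ q e ≠ none → e ∈ (plant i).alph
  /-- Property 2: each plant is strongly connected ... -/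
  sc : ∀ i, (plant i).StronglyConnected
  /-- ... with at least one marked state -/
  hasMarked : ∀ i, ∃ q, q ∈ (plant i).Qm
  /-- each restricted event belongs to some plant -/
  evIn : ∀ r ∈ reqs, ∃ i, r.1 ∈ (plant i).alph
  /-- Property 3.b: restricted events are controllable -/
  ctrl : ∀ r ∈ reqs, r.1 ∈ Sc
  /-- Property 3.c: at most one requirement per event -/
  uniq : ∀ r1 ∈ reqs, ∀ r2 ∈ reqs, r1.1 = r2.1 → r1 = r2
  /-- Property 3.e: each conjunction references each plant at most once -/
  once : ∀ r ∈ reqs, ∀ conj ∈ r.2, ∀ l1 ∈ conj, ∀ l2 ∈ conj, l1.i = l2.i → l1 = l2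
  /-- Property 3.f: no negated reference to a single-state plant -/
  nneg : ∀ r ∈ reqs, ∀ conj ∈ r.2, ∀ l ∈ conj, l.pos = false → ∃ a b : Q l.i, a ≠ b
  /-- Property 3.g: each plant referenced in a condition is a sensor automaton -/
  sens : ∀ r ∈ reqs, ∀ conj ∈ r.2, ∀ l ∈ conj, (plant l.i).alph ⊆ Su
  /-- each condition is a nonempty DNF -/
  condNe : ∀ r ∈ reqs, r.2 ≠ []

namespace CNMS

variable {m : ℕ} {Q : Fin m → Type} {E : Type}

/-- The composed (monolithic) plant `‖𝒫`. -/
noncomputable def plantComp (cp : CNMS m Q E) : Aut (∀ i, Q i) E :=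
  Aut.shuffle cp.plant

/-- `𝒫 ‖ 𝓡`: the plant composed with all requirements. -/
noncomputable def sup (cp : CNMS m Q E) : Aut (∀ i, Q i) E :=
  cp.reqs.foldl (fun A r => A.restrict r.1 (fun g => r.2.eval g)) cp.plantComp

end CNMS

/-!
Under CNMS, every state of `P ‖ R₁ ‖ ⋯ ‖ Rₙ` (reachable or not) can reach a marked state.
Events of sensor automata are uncontrollable, hence never restricted, so a sensor automaton
can be moved to any of its states without disturbing the other plants. A restricted event
`μ needs C` is enabled by first moving the sensor automata referenced in one conjunction of
`C` to states satisfying its literals (each plant occurs at most once in a conjunction, and a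
negated reference can be met because the plant has a second state); this moves no
non-sensor plant. Hence each non-sensor plant can follow any path of its own
(strongly connected) automaton to a marked state, one after the other, and finally the
sensor automata are moved to marked states.
-/

namespace Aut

section Runs

variable {Q E : Type} (A : Aut Q E)

theorem run_nil (q : Q) : A.run q [] = some q := rfl

theorem run_cons (q : Q) (e : E) (s : List E) :
    A.run q (e :: s) = (A.δ q e).bind fun q' => A.run q' s := rfl

theorem run_append (q : Q) (s t : List E) :
    A.run q (s ++ t) = (A.run q s).bind fun q' => A.run q' t := by
  induction s generalizing q with
  | nil => rfl
  | cons e s ih =>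
    rw [List.cons_append, run_cons, run_cons]
    cases A.δ q e <;> simp [ih]

def Reaches (q q' : Q) : Prop := ∃ s, A.run q s = some q'

variable {A}

theorem Reaches.refl (q : Q) : A.Reaches q q := ⟨[], rfl⟩

theorem Reaches.trans {q₁ q₂ q₃ : Q} : A.Reaches q₁ q₂ → A.Reaches q₂ q₃ → A.Reaches q₁ q₃
  | ⟨s, hs⟩, ⟨t, ht⟩ => ⟨s ++ t, by rw [run_append, hs, Option.bind_some, ht]⟩

theorem reaches_of_δ_eq_some {q q' : Q} {e : E} (h : A.δ q e = some q') : A.Reaches q q' :=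
  ⟨[e], by rw [run_cons, h, Option.bind_some, run_nil]⟩

theorem Reaches.coreachable {q q' : Q} (h : A.Reaches q q') (hq' : q' ∈ A.Qm) :
    A.Coreachable q :=
  let ⟨s, hs⟩ := h
  ⟨s, q', hs, hq'⟩

end Runs

section Restrict

variable {Q E α : Type} (μ : α → E) (C : α → Q → Prop)

theorem foldl_restrict_Qm (L : List α) (A : Aut Q E) :
    (L.foldl (fun A r => A.restrict (μ r) (C r)) A).Qm = A.Qm := by
  induction L generalizing A with
  | nil => rfl
  | cons r L ih => exact ih _

theorem foldl_restrict_δ_of_forall {q : Q} {e : E} (L : List α) (A : Aut Q E)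
    (h : ∀ r ∈ L, μ r = e → C r q) :
    (L.foldl (fun A r => A.restrict (μ r) (C r)) A).δ q e = A.δ q e := by
  induction L generalizing A with
  | nil => rfl
  | cons r L ih =>
    rw [List.foldl_cons, ih _ fun r' hr' => h r' (List.mem_cons_of_mem _ hr')]
    exact if_neg fun ⟨he, hC⟩ => hC (h r List.mem_cons_self he.symm)

end Restrict

section Product

variable {ι E : Type} [DecidableEq ι] {Q : ι → Type} {A : Aut (∀ i, Q i) E}

theorem run_update_of_δ {i : ι} {B : Aut (Q i) E}
    (hB : ∀ g e q, B.δ (g i) e = some q → A.δ g e = some (Function.update g i q))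
    (s : List E) :
    ∀ {g : ∀ i, Q i} {q : Q i}, B.run (g i) s = some q →
      A.run g s = some (Function.update g i q) := by
  induction s with
  | nil =>
    intro g q h
    rw [run_nil, Option.some.injEq] at h
    rw [run_nil, ← h, Function.update_eq_self]
  | cons e s ih =>
    intro g q h
    rw [run_cons] at h
    obtain ⟨q₁, hq₁, hrun⟩ := Option.bind_eq_some_iff.mp h
    rw [run_cons, hB g e q₁ hq₁, Option.bind_some,
      ih (by rwa [Function.update_self]), Function.update_idem]

theorem reaches_update_of_δ {i : ι} {B : Aut (Q i) E} (hsc : B.StronglyConnected)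
    (hB : ∀ g e q, B.δ (g i) e = some q → A.δ g e = some (Function.update g i q))
    (g : ∀ i, Q i) (q : Q i) : A.Reaches g (Function.update g i q) :=
  let ⟨s, hs⟩ := hsc (g i) q
  ⟨s, run_update_of_δ hB s hs⟩

theorem reaches_of_forall_not_mem_eq (S : Finset ι)
    (hS : ∀ i ∈ S, ∀ g (q : Q i), A.Reaches g (Function.update g i q)) :
    ∀ {g g' : ∀ i, Q i}, (∀ j ∉ S, g' j = g j) → A.Reaches g g' := by
  induction S using Finset.induction_on with
  | empty =>
    intro g g' h
    rw [funext fun j => h j (Finset.notMem_empty j)]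
    exact Reaches.refl g
  | insert a S _ ih =>
    intro g g' h
    refine (hS a (Finset.mem_insert_self a S) g (g' a)).trans
      (ih (fun i hi => hS i (Finset.mem_insert_of_mem hi)) fun j hj => ?_)
    by_cases hja : j = a
    · subst hja
      exact (Function.update_self ..).symm
    · rw [Function.update_of_ne hja]
      exact h j (by simp [hja, hj])

theorem exists_reaches_forall_mem (M : ∀ i, Set (Q i)) (S : Finset ι)
    (hS : ∀ i ∈ S, ∀ g, ∃ g', A.Reaches g g' ∧ g' i ∈ M i ∧ ∀ j ∈ S, j ≠ i → g' j = g j)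
    (g : ∀ i, Q i) : ∃ g', A.Reaches g g' ∧ ∀ i ∈ S, g' i ∈ M i := by
  induction S using Finset.induction_on generalizing g with
  | empty => exact ⟨g, Reaches.refl g, by simp⟩
  | insert a S haS ih =>
    have hS' : ∀ i ∈ S, ∀ g, ∃ g', A.Reaches g g' ∧ g' i ∈ M i ∧
        ∀ j ∈ S, j ≠ i → g' j = g j := fun i hi g =>
      let ⟨g', hg', hM, hfix⟩ := hS i (Finset.mem_insert_of_mem hi) g
      ⟨g', hg', hM, fun j hj => hfix j (Finset.mem_insert_of_mem hj)⟩
    obtain ⟨g₁, hg₁, hM₁⟩ := ih hS' g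
    obtain ⟨g₂, hg₂, hMa, hfix⟩ := hS a (Finset.mem_insert_self a S) g₁
    refine ⟨g₂, hg₁.trans hg₂, fun i hi => ?_⟩
    rcases Finset.mem_insert.mp hi with rfl | hi
    · exact hMa
    · rw [hfix i (Finset.mem_insert_of_mem hi) (ne_of_mem_of_not_mem hi haS)]
      exact hM₁ i hi

end Product

theorem shuffle_δ_of_mem {m : ℕ} {Q : Fin m → Type} {E : Type} {A : ∀ i, Aut (Q i) E}
    (hdisj : ∀ i j, i ≠ j → ∀ e, ¬(e ∈ (A i).alph ∧ e ∈ (A j).alph))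
    {i : Fin m} {e : E} (hi : e ∈ (A i).alph) (g : ∀ j, Q j) :
    (shuffle A).δ g e = ((A i).δ (g i) e).map (Function.update g i) := by
  have hex : ∃ j, e ∈ (A j).alph := ⟨i, hi⟩
  obtain rfl : hex.choose = i := by_contra fun h => hdisj _ _ h e ⟨hex.choose_spec, hi⟩
  exact dif_pos hex


end Aut

theorem Lit.exists_forall_eval {m : ℕ} {Q : Fin m → Type} (l : Lit m Q)
    (hneg : l.pos = false → ∃ a b : Q l.i, a ≠ b) :
    ∃ t : Q l.i, ∀ g : ∀ i, Q i, g l.i = t → l.eval g := by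
  cases hpos : l.pos with
  | true => exact ⟨l.q, fun g hg => by simpa [Lit.eval, hpos] using hg⟩
  | false =>
    obtain ⟨a, b, hab⟩ := hneg hpos
    obtain ⟨t, ht⟩ : ∃ t, t ≠ l.q := by
      by_cases ha : a = l.q
      · exact ⟨b, ha ▸ hab.symm⟩
      · exact ⟨a, ha⟩
    exact ⟨t, fun g hg => by simpa [Lit.eval, hpos, hg] using ht⟩

theorem Lit.eval_update_of_ne {m : ℕ} {Q : Fin m → Type} {l : Lit m Q} {g : ∀ i, Q i}
    {i : Fin m} (q : Q i) (hi : l.i ≠ i) : l.eval (Function.update g i q) ↔ l.eval g := by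
  simp only [Lit.eval, Function.update_of_ne hi]

namespace CNMS

variable {m : ℕ} {Q : Fin m → Type} {E : Type} (cp : CNMS m Q E)

def IsSensor (i : Fin m) : Prop := (cp.plant i).alph ⊆ cp.Su

variable {cp}

theorem not_isSensor_of_mem_reqs {r : E × DNF m Q} (hr : r ∈ cp.reqs) {i : Fin m}
    (hi : r.1 ∈ (cp.plant i).alph) : ¬ cp.IsSensor i :=
  fun hs => cp.part r.1 ⟨cp.ctrl r hr, hs hi⟩

theorem mem_sup_Qm_iff {g : ∀ i, Q i} : g ∈ cp.sup.Qm ↔ ∀ i, g i ∈ (cp.plant i).Qm := by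
  rw [sup, Aut.foldl_restrict_Qm]
  rfl

theorem sup_δ_eq_some {i : Fin m} {e : E} {g : ∀ i, Q i} {q : Q i}
    (hq : (cp.plant i).δ (g i) e = some q) (hC : ∀ r ∈ cp.reqs, r.1 = e → r.2.eval g) :
    cp.sup.δ g e = some (Function.update g i q) := by
  have hi : e ∈ (cp.plant i).alph := cp.dom i (g i) e (by simp [hq])
  refine (Aut.foldl_restrict_δ_of_forall Prod.fst (fun r g => r.2.eval g) cp.reqs
    cp.plantComp hC).trans ?_
  rw [plantComp, Aut.shuffle_δ_of_mem cp.disj hi, hq]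
  rfl

theorem reaches_update_of_isSensor {i : Fin m} (hi : cp.IsSensor i) (g : ∀ i, Q i)
    (q : Q i) : cp.sup.Reaches g (Function.update g i q) :=
  Aut.reaches_update_of_δ (cp.sc i) (fun g e q hq => sup_δ_eq_some hq fun r hr he =>
    absurd hi (not_isSensor_of_mem_reqs hr (he ▸ cp.dom i (g i) e (by simp [hq])))) g q

theorem exists_reaches_forall_eval {r : E × DNF m Q} (hr : r ∈ cp.reqs)
    {conj : List (Lit m Q)} (hc : conj ∈ r.2) (g : ∀ i, Q i) :
    ∃ g', cp.sup.Reaches g g' ∧ (∀ l ∈ conj, l.eval g') ∧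
      ∀ j, ¬ cp.IsSensor j → g' j = g j := by
  suffices ∀ cj ⊆ conj, ∃ g', cp.sup.Reaches g g' ∧ (∀ l ∈ cj, l.eval g') ∧
      ∀ j, ¬ cp.IsSensor j → g' j = g j from this conj (List.Subset.refl conj)
  intro cj
  induction cj with
  | nil => exact fun _ => ⟨g, Aut.Reaches.refl g, by simp, fun _ _ => rfl⟩
  | cons l cj ih =>
    intro hsub
    have hl : l ∈ conj := hsub List.mem_cons_self
    obtain ⟨g₁, hg₁, heval₁, hfix₁⟩ := ih (List.subset_of_cons_subset hsub)
    obtain ⟨t, ht⟩ := l.exists_forall_eval (cp.nneg r hr conj hc l hl)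
    have hsens : cp.IsSensor l.i := cp.sens r hr conj hc l hl
    refine ⟨Function.update g₁ l.i t, hg₁.trans (reaches_update_of_isSensor hsens g₁ t),
      fun l' hl' => ?_, fun j hj => ?_⟩
    · by_cases hii : l'.i = l.i
      · obtain rfl : l' = l := cp.once r hr conj hc l' (hsub hl') l hl hii
        exact ht _ (Function.update_self ..)
      · rcases List.mem_cons.mp hl' with rfl | hl'
        · exact absurd rfl hii
        · exact (Lit.eval_update_of_ne t hii).mpr (heval₁ l' hl')
    · rw [Function.update_of_ne (by rintro rfl; exact hj hsens), hfix₁ j hj]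

theorem exists_reaches_enabled (e : E) (g : ∀ i, Q i) :
    ∃ g', cp.sup.Reaches g g' ∧ (∀ r ∈ cp.reqs, r.1 = e → r.2.eval g') ∧
      ∀ j, ¬ cp.IsSensor j → g' j = g j := by
  by_cases hreq : ∃ r ∈ cp.reqs, r.1 = e
  · obtain ⟨r, hr, rfl⟩ := hreq
    obtain ⟨conj, hc⟩ := List.exists_mem_of_ne_nil r.2 (cp.condNe r hr)
    obtain ⟨g', hg', heval, hfix⟩ := exists_reaches_forall_eval hr hc g
    refine ⟨g', hg', fun r' hr' he => ?_, hfix⟩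
    obtain rfl := cp.uniq r' hr' r hr he
    exact ⟨conj, hc, heval⟩
  · exact ⟨g, Aut.Reaches.refl g, fun r hr he => absurd ⟨r, hr, he⟩ hreq, fun _ _ => rfl⟩

theorem exists_reaches_of_δ_eq_some {i : Fin m} {e : E} {g : ∀ i, Q i} {q : Q i}
    (hq : (cp.plant i).δ (g i) e = some q) :
    ∃ g', cp.sup.Reaches g g' ∧ g' i = q ∧ ∀ j ≠ i, ¬ cp.IsSensor j → g' j = g j := by
  by_cases hi : cp.IsSensor i
  · exact ⟨_, reaches_update_of_isSensor hi g q, Function.update_self ..,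
      fun j hj _ => Function.update_of_ne hj ..⟩
  obtain ⟨g₁, hg₁, hC, hfix⟩ := exists_reaches_enabled e g
  refine ⟨Function.update g₁ i q,
    hg₁.trans (Aut.reaches_of_δ_eq_some (sup_δ_eq_some (hfix i hi ▸ hq) hC)),
    Function.update_self .., fun j hj hjs => ?_⟩
  rw [Function.update_of_ne hj, hfix j hjs]

theorem exists_reaches_eq (i : Fin m) (g : ∀ i, Q i) (q : Q i) :
    ∃ g', cp.sup.Reaches g g' ∧ g' i = q ∧ ∀ j ≠ i, ¬ cp.IsSensor j → g' j = g j := by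
  obtain ⟨s, hs⟩ := cp.sc i (g i) q
  induction s generalizing g with
  | nil =>
    rw [Aut.run_nil, Option.some.injEq] at hs
    exact ⟨g, Aut.Reaches.refl g, hs, fun _ _ _ => rfl⟩
  | cons e s ih =>
    rw [Aut.run_cons] at hs
    obtain ⟨q₁, hq₁, hrun⟩ := Option.bind_eq_some_iff.mp hs
    obtain ⟨g₁, hg₁, hi₁, hfix₁⟩ := exists_reaches_of_δ_eq_some hq₁
    obtain ⟨g', hg', hi', hfix'⟩ := ih g₁ (hi₁ ▸ hrun)
    exact ⟨g', hg₁.trans hg', hi', fun j hj hjs => (hfix' j hj hjs).trans (hfix₁ j hj hjs)⟩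

theorem sup_coreachable (g : ∀ i, Q i) : cp.sup.Coreachable g := by
  choose qm hqm using cp.hasMarked
  obtain ⟨g₁, hg₁, hm₁⟩ := cp.sup.exists_reaches_forall_mem (fun i => (cp.plant i).Qm)
    (Finset.univ.filter fun i => ¬ cp.IsSensor i)
    (fun i _ g => (exists_reaches_eq i g (qm i)).imp fun g' ⟨hg', hi, hfix⟩ =>
      ⟨hg', hi ▸ hqm i, fun j hj hji => hfix j hji (Finset.mem_filter.mp hj).2⟩) g
  let g₂ : ∀ i, Q i := fun i => if cp.IsSensor i then qm i else g₁ i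
  have hg₂ : cp.sup.Reaches g₁ g₂ :=
    cp.sup.reaches_of_forall_not_mem_eq (Finset.univ.filter cp.IsSensor)
      (fun i hi => reaches_update_of_isSensor (Finset.mem_filter.mp hi).2)
      fun j hj => if_neg fun hjs => hj (Finset.mem_filter.mpr ⟨Finset.mem_univ j, hjs⟩)
  refine (hg₁.trans hg₂).coreachable (mem_sup_Qm_iff.mpr fun i => ?_)
  by_cases hi : cp.IsSensor i
  · simpa [g₂, hi] using hqm i
  · simpa [g₂, hi] using hm₁ i (by simp [hi])

end CNMS

/-- for a CNMS control problem, the modular supervisors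
`Sj = P ‖ Rj` are nonconflicting: `S1 ‖ ... ‖ Sn = P ‖ R1 ‖ ... ‖ Rn`
is nonblocking. -/
theorem cnms_nonconflicting {m : ℕ} {Q : Fin m → Type} {E : Type}
    (cp : CNMS m Q E) :
    cp.sup.Nonblocking :=
  fun g _ => cp.sup_coreachable g
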